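/- Let k ≥ 1 and let X : {0,1,2,3}^{2k} → ℝ be a tensor invariant under every permutation of its 2k indices. Define the matrix T, with rows and columns indexed by tuples 𝛍, 𝛎 ∈ {0,1,2,3}^k, by T_{𝛍𝛎} = X_{μ₁…μ_k ν₁…ν_k}, and define y_α for α ∈ ℕ³ with |α| ≤ 2k as the value of X on any index tuple containing exactly α₁ indices equal to 1, α₂ indices equal to 2, α₃ indices equal to 3, and all remaining indices equal to 0 (well defined by the permutation invariance of X). Then T is positive semidefinite if and only if the moment matrix M_k(y), indexed by multi-indices α, β ∈ ℕ³ with |α|,|β| ≤ k and entries M_k(y)_{αβ} = y_{α+β}, is positive semidefinite. -/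

import Mathlib

/-!
Permutation invariance makes `X_w` depend only on the degree of `w`, i.e. on how many of its
indices equal `1`, `2` and `3` (two words with the same letter counts differ by a permutation).
Since degrees add under concatenation, `T_{μν} = M_k(y)_{deg μ, deg ν}`: `T` is the submatrix of
`M_k(y)` along `μ ↦ deg μ`. This map is onto, and positive semidefiniteness passes to submatrices;
along a right inverse of `deg`, `M_k(y)` is in turn a submatrix of `T`.
-/

open Matrix

noncomputable section

/-- Multi-indices `α ∈ ℕ^n` of degree `|α| ≤ k`. -/
abbrev MIdx (n k : ℕ) := {α : Fin n → Fin (k + 1) // (∑ i, (α i).1) ≤ k}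

/-- The multi-index as an element of `ℕ^n`. -/
def MIdx.toNat {n k : ℕ} (α : MIdx n k) : Fin n → ℕ := fun i => (α.1 i).1

/-- The moment matrix of order `k`: `M_k(y)_{αβ} = y_{α+β}` for `|α|,|β| ≤ k`. -/
def momentMatrix (n k : ℕ) (y : (Fin n → ℕ) → ℝ) :
    Matrix (MIdx n k) (MIdx n k) ℝ :=
  Matrix.of fun α β => y (α.toNat + β.toNat)

/-- A canonical index tuple of length `N` containing exactly `α 0` indices equal to `1`,
`α 1` indices equal to `2`, `α 2` indices equal to `3`, the rest being `0`. -/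
def idxTuple (N : ℕ) (α : Fin 3 → ℕ) : Fin N → Fin 4 := fun i =>
  if (i : ℕ) < α 0 then 1
  else if (i : ℕ) < α 0 + α 1 then 2
  else if (i : ℕ) < α 0 + α 1 + α 2 then 3
  else 0

open Finset Function

namespace Matrix

variable {m n R : Type*} [Ring R] [PartialOrder R] [StarRing R]

theorem posSemidef_submatrix_iff_of_surjective {M : Matrix n n R} {f : m → n}
    (hf : Surjective f) : (M.submatrix f f).PosSemidef ↔ M.PosSemidef := by
  refine ⟨fun h => ?_, fun h => h.submatrix f⟩
  simpa only [submatrix_submatrix, (rightInverse_surjInv hf).comp_eq_id, submatrix_id_id]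
    using h.submatrix (surjInv hf)

end Matrix

section LetterCount

variable {ι ι' α : Type*} [Fintype ι] [Fintype ι'] [DecidableEq α]

def letterCount (w : ι → α) (a : α) : ℕ := #{i | w i = a}

theorem letterCount_comp_equiv (w : ι → α) (e : ι' ≃ ι) :
    letterCount (w ∘ e) = letterCount w := by
  funext a
  exact card_equiv e (by simp)

theorem exists_perm_comp_eq_of_letterCount_eq {w w' : ι → α}
    (h : letterCount w = letterCount w') : ∃ π : Equiv.Perm ι, w ∘ π = w' := by
  have hfib (a : α) : { i // w' i = a } ≃ { i // w i = a } :=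
    Fintype.equivOfCardEq (by simpa [Fintype.card_subtype, letterCount] using (congrFun h a).symm)
  exact ⟨Equiv.ofFiberEquiv hfib, funext (Equiv.ofFiberEquiv_map hfib)⟩

theorem letterCount_append {k l : ℕ} (u : Fin k → α) (v : Fin l → α) :
    letterCount (Fin.append u v) = letterCount u + letterCount v := by
  funext a
  simp only [letterCount, card_filter, Fin.sum_univ_add, Fin.append_left, Fin.append_right,
    Pi.add_apply]

theorem sum_letterCount [Fintype α] (w : ι → α) : ∑ a, letterCount w a = Fintype.card ι := by
  simp only [letterCount]
  rw [← card_eq_sum_card_fiberwise (fun i _ => mem_univ (w i)), card_univ]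

theorem letterCount_eq_of_iff_Ico {N lo hi : ℕ} {w : Fin N → α}
    {a : α} (hhi : hi ≤ N) (h : ∀ i : Fin N, w i = a ↔ lo ≤ (i : ℕ) ∧ (i : ℕ) < hi) :
    letterCount w a = hi - lo := by
  rw [letterCount, filter_congr fun i _ => h i, card_filter,
    Fin.sum_univ_eq_sum_range (fun i => if lo ≤ i ∧ i < hi then 1 else 0), ← card_filter]
  have : {i ∈ range N | lo ≤ i ∧ i < hi} = Ico lo hi := by
    ext i; simp only [mem_filter, mem_range, mem_Ico]; omega
  rw [this, Nat.card_Ico]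

end LetterCount

section Degree

variable {ι : Type*} [Fintype ι] {n : ℕ}

def degree (w : ι → Fin (n + 1)) (j : Fin n) : ℕ := letterCount w j.succ

theorem letterCount_zero_add_sum_degree (w : ι → Fin (n + 1)) :
    letterCount w 0 + ∑ j, degree w j = Fintype.card ι := by
  rw [← sum_letterCount w, Fin.sum_univ_succ]
  rfl

theorem sum_degree_le (w : ι → Fin (n + 1)) : ∑ j, degree w j ≤ Fintype.card ι := by
  rw [← letterCount_zero_add_sum_degree w]
  exact Nat.le_add_left _ _

theorem letterCount_eq_of_degree_eq {w w' : ι → Fin (n + 1)} (h : degree w = degree w') :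
    letterCount w = letterCount w' := by
  funext a
  cases a using Fin.cases with
  | zero =>
    have hw := letterCount_zero_add_sum_degree w
    rw [h, ← letterCount_zero_add_sum_degree w'] at hw
    exact Nat.add_right_cancel hw
  | succ j => exact congrFun h j

theorem degree_append {k l : ℕ} (u : Fin k → Fin (n + 1)) (v : Fin l → Fin (n + 1)) :
    degree (Fin.append u v) = degree u + degree v := by
  funext j
  simp only [degree, letterCount_append, Pi.add_apply]

theorem degree_comp_equiv {ι' : Type*} [Fintype ι'] (w : ι → Fin (n + 1)) (e : ι' ≃ ι) :
    degree (w ∘ e) = degree w := by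
  funext j
  simp only [degree, letterCount_comp_equiv]

theorem apply_eq_of_degree_eq {β : Type*} {X : (ι → Fin (n + 1)) → β}
    (hX : ∀ (π : Equiv.Perm ι) w, X (w ∘ π) = X w) {w w' : ι → Fin (n + 1)}
    (h : degree w = degree w') : X w = X w' := by
  obtain ⟨π, rfl⟩ := exists_perm_comp_eq_of_letterCount_eq (letterCount_eq_of_degree_eq h)
  exact (hX π w).symm

end Degree

theorem degree_idxTuple {N : ℕ} (α : Fin 3 → ℕ) (h : ∑ j, α j ≤ N) :
    degree (idxTuple N α) = α := by
  rw [Fin.sum_univ_three] at h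
  funext j
  fin_cases j
  · refine (letterCount_eq_of_iff_Ico (a := 1) (lo := 0) (hi := α 0) (by omega)
      (by unfold idxTuple; grind)).trans ?_
    simp
  · refine (letterCount_eq_of_iff_Ico (a := 2) (lo := α 0) (hi := α 0 + α 1) (by omega)
      (by unfold idxTuple; grind)).trans ?_
    simp
  · refine (letterCount_eq_of_iff_Ico (a := 3) (lo := α 0 + α 1) (hi := α 0 + α 1 + α 2)
      h (by unfold idxTuple; grind)).trans ?_
    simp

def MIdx.ofDegree {n k : ℕ} (μ : Fin k → Fin (n + 1)) : MIdx n k :=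
  have hμ : ∑ j, degree μ j ≤ k := by simpa using sum_degree_le μ
  ⟨fun j => ⟨degree μ j,
    Nat.lt_succ_of_le ((single_le_sum (fun _ _ => Nat.zero_le _) (mem_univ j)).trans hμ)⟩, hμ⟩

theorem MIdx.ofDegree_surjective (k : ℕ) :
    Surjective (MIdx.ofDegree : (Fin k → Fin 4) → MIdx 3 k) := fun α =>
  ⟨idxTuple k α.toNat, Subtype.ext <| funext fun j => Fin.ext <|
    congrFun (degree_idxTuple α.toNat α.2) j⟩

theorem dite_lt_eq_append_comp_finCongr {β : Type*} {k : ℕ} (u v : Fin k → β) :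
    (fun i : Fin (2 * k) => if h : (i : ℕ) < k then u ⟨i, h⟩ else v ⟨i - k, by omega⟩) =
      Fin.append u v ∘ finCongr (two_mul k) := by
  funext i
  simp only [Fin.append, Function.comp_apply, Fin.addCases, finCongr_apply, Fin.val_cast,
    Fin.cast_eq_self, eq_rec_constant]
  split_ifs <;> rfl

/-- for a permutation-invariant tensor `X : {0,1,2,3}^{2k} → ℝ` with
associated matrix `T_{𝛍𝛎} = X_{μ₁…μ_k ν₁…ν_k}` and associated tms `y` of degree `2k`
in 3 variables, `T` is positive semidefinite if and only if the moment matrix `M_k(y)`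
is positive semidefinite. -/
theorem partial_transpose_posSemidef_iff_moment_matrix (k : ℕ)
    (X : (Fin (2 * k) → Fin 4) → ℝ)
    (hsym : ∀ (π : Equiv.Perm (Fin (2 * k))) (μs : Fin (2 * k) → Fin 4),
      X (μs ∘ π) = X μs)
    (y : (Fin 3 → ℕ) → ℝ)
    (hy : ∀ α : Fin 3 → ℕ, (∑ i, α i) ≤ 2 * k → y α = X (idxTuple (2 * k) α)) :
    (Matrix.of fun μs νs : Fin k → Fin 4 =>
        X (fun i : Fin (2 * k) =>
          if h : (i : ℕ) < k then μs ⟨(i : ℕ), h⟩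
          else νs ⟨(i : ℕ) - k, by have := i.isLt; omega⟩)).PosSemidef
    ↔ (momentMatrix 3 k y).PosSemidef := by
  have hX (w : Fin (2 * k) → Fin 4) : X w = y (degree w) := by
    have hw : ∑ j, degree w j ≤ 2 * k := by simpa using sum_degree_le w
    rw [hy _ hw, apply_eq_of_degree_eq hsym (degree_idxTuple _ hw).symm]
  rw [← posSemidef_submatrix_iff_of_surjective (MIdx.ofDegree_surjective k)]
  refine iff_of_eq (congrArg PosSemidef ?_)
  ext μ ν
  rw [of_apply, dite_lt_eq_append_comp_finCongr, hX, degree_comp_equiv, degree_append]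
  rfl
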